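/- Let V be a finite set, let C : V → Fin χ be a coloring of V, and let 𝒮 be a partition of V into nonempty parts with maximum part size s. Then there exists a collection 𝓘 of subsets of V with |𝓘| ≤ 2·⌈log₂ χ⌉ + s that is simultaneously a colored separating system on (V, C) and a lifted separating system on (V, 𝒮). -/

import Mathlib

/-!
Two families are combined. Since `χ ≤ 2 ^ ⌈log₂ χ⌉`, two distinct colors differ in one of the
first `⌈log₂ χ⌉` binary digits, so the `2 ⌈log₂ χ⌉` sets `{v | bit i of C v is b}` form a colored
separating system. Numbering the elements of each part by `0, 1, …` (below `s`), the `s` sets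
`{v | v does not have number j}` form a lifted separating system: the one with `j` the number of
`x` misses `x` but, the numbering being injective on the part of `x`, contains the rest of it.
-/

/-- A colored separating system on `(V, C)`: for every ordered pair of distinct
elements `x, y` of `V` with different colors, some `I` in the system contains
`x` but not `y`. -/
def IsColoredSepSystem {V : Type*} {χ : ℕ} (C : V → Fin χ)
    (𝓘 : Finset (Finset V)) : Prop :=
  ∀ x y : V, x ≠ y → C x ≠ C y → ∃ I ∈ 𝓘, x ∈ I ∧ y ∉ I

/-- A lifted separating system on `(V, 𝒮)`, where `𝒮` is a partition of `V`:
for every part `S` and every `x ∈ S`, some `I` in the system includes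
`S \ {x}` and excludes `x`. -/
def IsLiftedSepSystem {V : Type*} [Fintype V] [DecidableEq V]
    (𝒮 : Finpartition (Finset.univ : Finset V)) (𝓘 : Finset (Finset V)) : Prop :=
  ∀ S ∈ 𝒮.parts, ∀ x ∈ S, ∃ I ∈ 𝓘, S \ {x} ⊆ I ∧ x ∉ I

open Finset

theorem IsColoredSepSystem.mono {V : Type*} {χ : ℕ} {C : V → Fin χ} {𝓘 𝓙 : Finset (Finset V)}
    (h : IsColoredSepSystem C 𝓘) (h𝓘𝓙 : 𝓘 ⊆ 𝓙) : IsColoredSepSystem C 𝓙 := by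
  intro x y hxy hC
  obtain ⟨I, hI, hxI, hyI⟩ := h x y hxy hC
  exact ⟨I, h𝓘𝓙 hI, hxI, hyI⟩

theorem IsLiftedSepSystem.mono {V : Type*} [Fintype V] [DecidableEq V]
    {𝒮 : Finpartition (univ : Finset V)} {𝓘 𝓙 : Finset (Finset V)}
    (h : IsLiftedSepSystem 𝒮 𝓘) (h𝓘𝓙 : 𝓘 ⊆ 𝓙) : IsLiftedSepSystem 𝒮 𝓙 := by
  intro S hS x hx
  obtain ⟨I, hI, hSI, hxI⟩ := h S hS x hx
  exact ⟨I, h𝓘𝓙 hI, hSI, hxI⟩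

theorem Nat.exists_lt_testBit_ne_of_lt_two_pow {a b k : ℕ} (ha : a < 2 ^ k) (hb : b < 2 ^ k)
    (hab : a ≠ b) : ∃ i < k, a.testBit i ≠ b.testBit i := by
  obtain ⟨i, hi⟩ : ∃ i, a.testBit i ≠ b.testBit i := by
    by_contra! h
    exact hab (Nat.eq_of_testBit_eq h)
  refine ⟨i, lt_of_not_ge fun hki => hi ?_, hi⟩
  have h2 : 2 ^ k ≤ 2 ^ i := Nat.pow_le_pow_right two_pos hki
  rw [Nat.testBit_lt_two_pow (ha.trans_le h2), Nat.testBit_lt_two_pow (hb.trans_le h2)]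

section Colored

variable {V : Type*} [Fintype V] [DecidableEq V] {χ : ℕ}

def bitSets (C : V → Fin χ) (k : ℕ) : Finset (Finset V) :=
  (range k ×ˢ univ).image fun p : ℕ × Bool => univ.filter fun v => (C v : ℕ).testBit p.1 = p.2

theorem card_bitSets_le (C : V → Fin χ) (k : ℕ) : #(bitSets C k) ≤ 2 * k := by
  refine card_image_le.trans ?_
  simp [mul_comm]

theorem isColoredSepSystem_bitSets (C : V → Fin χ) {k : ℕ} (hχ : χ ≤ 2 ^ k) :
    IsColoredSepSystem C (bitSets C k) := by
  intro x y _ hC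
  obtain ⟨i, hik, hi⟩ := Nat.exists_lt_testBit_ne_of_lt_two_pow
    ((C x).isLt.trans_le hχ) ((C y).isLt.trans_le hχ) (Fin.val_ne_of_ne hC)
  refine ⟨univ.filter fun v => (C v : ℕ).testBit i = (C x : ℕ).testBit i, ?_, by simp,
    by simpa [eq_comm] using hi⟩
  exact mem_image.2 ⟨(i, (C x : ℕ).testBit i), by simpa using hik, rfl⟩

end Colored

section Lifted

variable {V : Type*} [Fintype V] [DecidableEq V]

def levelComplements (r : V → ℕ) (n : ℕ) : Finset (Finset V) :=
  (range n).image fun j => univ.filter (r · ≠ j)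

theorem card_levelComplements_le (r : V → ℕ) (n : ℕ) : #(levelComplements r n) ≤ n :=
  card_image_le.trans (card_range n).le

theorem isLiftedSepSystem_levelComplements {𝒮 : Finpartition (univ : Finset V)} {r : V → ℕ}
    {n : ℕ} (hr : ∀ v, r v < n) (hinj : ∀ S ∈ 𝒮.parts, Set.InjOn r S) :
    IsLiftedSepSystem 𝒮 (levelComplements r n) := by
  intro S hS x hx
  refine ⟨univ.filter (r · ≠ r x), mem_image_of_mem _ (mem_range.2 (hr x)), ?_, by simp⟩
  intro y hy
  obtain ⟨hyS, hyx⟩ := mem_sdiff.1 hy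
  simp only [mem_filter, mem_univ, true_and]
  exact fun hyx' => hyx (mem_singleton.2 (hinj S hS hyS hx hyx'))

noncomputable def Finpartition.indexInPart (𝒮 : Finpartition (univ : Finset V)) (v : V) : ℕ :=
  (𝒮.part v).toList.idxOf v

theorem Finpartition.indexInPart_lt (𝒮 : Finpartition (univ : Finset V)) (v : V) :
    𝒮.indexInPart v < 𝒮.parts.sup card := by
  have hv : v ∈ 𝒮.part v := 𝒮.mem_part (mem_univ v)
  calc 𝒮.indexInPart v < #(𝒮.part v) := by
        simpa [indexInPart] using List.idxOf_lt_length_of_mem (mem_toList.2 hv)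
    _ ≤ 𝒮.parts.sup card := le_sup (𝒮.part_mem.2 (mem_univ v))

theorem Finpartition.injOn_indexInPart (𝒮 : Finpartition (univ : Finset V)) {S : Finset V}
    (hS : S ∈ 𝒮.parts) : Set.InjOn 𝒮.indexInPart S := by
  intro x hx y hy hxy
  simp only [indexInPart, 𝒮.part_eq_of_mem hS hx, 𝒮.part_eq_of_mem hS hy] at hxy
  exact (List.idxOf_inj (mem_toList.2 hx)).1 hxy

end Lifted

/-- The combinatorial content of Corollary 6: there is a collection of at most
`2 ⌈log₂ χ⌉ + s` subsets of `V` (where `s` is the maximum part size of `𝒮`)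
which is simultaneously a colored separating system on `(V, C)` and a lifted
separating system on `(V, 𝒮)`. -/
theorem exists_colored_and_lifted_sep_system {V : Type*} [Fintype V]
    [DecidableEq V] {χ : ℕ} (C : V → Fin χ)
    (𝒮 : Finpartition (Finset.univ : Finset V)) :
    ∃ 𝓘 : Finset (Finset V),
      𝓘.card ≤ 2 * Nat.clog 2 χ + 𝒮.parts.sup Finset.card ∧
      IsColoredSepSystem C 𝓘 ∧ IsLiftedSepSystem 𝒮 𝓘 := by
  set k := Nat.clog 2 χ
  set s := 𝒮.parts.sup card
  refine ⟨bitSets C k ∪ levelComplements 𝒮.indexInPart s, ?_, ?_, ?_⟩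
  · calc #(bitSets C k ∪ levelComplements 𝒮.indexInPart s)
        ≤ #(bitSets C k) + #(levelComplements 𝒮.indexInPart s) := card_union_le _ _
      _ ≤ 2 * k + s := add_le_add (card_bitSets_le C k) (card_levelComplements_le _ s)
  · exact (isColoredSepSystem_bitSets C (Nat.le_pow_clog one_lt_two χ)).mono subset_union_left
  · exact (isLiftedSepSystem_levelComplements 𝒮.indexInPart_lt
      fun _ => 𝒮.injOn_indexInPart).mono subset_union_right
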